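/- arXiv:2009.05646 — 3 statements merged into one kernel-verified Lean document; each statement's English description precedes it below -/
import Mathlib

section
/- Let S be a numerical semigroup with S ≠ ℕ. Then S̃ is a numerical semigroup if and only if S has at most one atom strictly less than F(S). -/
open Set

def IsNumericalSet (S : Set ℕ) : Prop := 0 ∈ S ∧ Sᶜ.Finite

def IsNumericalSemigroup (S : Set ℕ) : Prop :=
  IsNumericalSet S ∧ ∀ a ∈ S, ∀ b ∈ S, a + b ∈ S

/-- The associated set `A(S) = {s ∈ S : s + S ⊆ S}`. -/
def A (S : Set ℕ) : Set ℕ := {s ∈ S | ∀ t ∈ S, s + t ∈ S}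

/-- The Frobenius number: the largest gap of `S`. -/
noncomputable def F (S : Set ℕ) : ℕ := sSup Sᶜ

/-- The base: the largest element of `S` below `F S`. -/
noncomputable def B (S : Set ℕ) : ℕ := sSup {s | s ∈ S ∧ s < F S}

/-- The multiplicity: the smallest positive element of `S`. -/
noncomputable def m (S : Set ℕ) : ℕ := sInf {s | s ∈ S ∧ 0 < s}

/-- The complement numerical set (for `S ≠ ℕ`). -/
noncomputable def Stilde (S : Set ℕ) : Set ℕ :=
  {x | ∃ s ∈ S, s ≤ B S ∧ x = B S - s} ∪ {n | B S ≤ n}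

-- The complement operation, with the convention that the complement of ℕ is ℕ.
open Classical in
noncomputable def complOp (S : Set ℕ) : Set ℕ :=
  if S = Set.univ then Set.univ else Stilde S

/-- The genus: the number of gaps. -/
noncomputable def genus (S : Set ℕ) : ℕ := Sᶜ.ncard

/-- The number of boxes with hook length 1. -/
noncomputable def c1 (S : Set ℕ) : ℕ := {n | n ∈ S ∧ n + 1 ∉ S}.ncard

/-- An atom: a positive element not a sum of two positive elements. -/
def IsAtomOf (S : Set ℕ) (a : ℕ) : Prop :=
  a ∈ S ∧ 0 < a ∧ ¬ ∃ x ∈ S, ∃ y ∈ S, 0 < x ∧ 0 < y ∧ a = x + y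

/-- A small atom: an atom smaller than the Frobenius number. -/
def IsSmallAtom (S : Set ℕ) (a : ℕ) : Prop := IsAtomOf S a ∧ a < F S

/-- The embedding dimension: the number of atoms. -/
noncomputable def numAtoms (S : Set ℕ) : ℕ := {a | IsAtomOf S a}.ncard

/-- Maximal embedding dimension. -/
def MaxED (S : Set ℕ) : Prop := numAtoms S = m S


/-!
Write `B = B(S)` and `m` for the multiplicity. For `a = B - u` and `b = B - v` in `S̃` with
`a + b < B`, the sum lies in `S̃` exactly when `u + v - B ∈ S`; so `S̃` is a semigroup iff
`u + v - B ∈ S` whenever `u, v ∈ S ∩ [0, B]` and `u + v > B`. Choosing for `v` the multiple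
of `m` that brings `u + v - B` into `(0, m]` forces `u + v - B = m`, hence `u ≡ B (mod m)`;
with `u = m` this gives `m ∣ B`, so every element of `S` below `F` is a multiple of `m`.
Conversely, that divisibility makes `u + v - B` a multiple of `m`, hence an element of `S`.
Finally, the elements of `S` below `F` are sums of small atoms, and `m` is the only atom
divisible by `m`, so the divisibility says precisely that `m` is the only possible small atom.
-/

open Set

def AddSubBClosed (S : Set ℕ) : Prop :=
  ∀ u ∈ S, ∀ v ∈ S, u ≤ B S → v ≤ B S → B S < u + v → u + v - B S ∈ S

variable {S : Set ℕ}

lemma le_B {s : ℕ} (hs : s ∈ S) (hsF : s < F S) : s ≤ B S :=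
  le_csSup ⟨F S, fun _ hx => hx.2.le⟩ ⟨hs, hsF⟩

lemma m_le {s : ℕ} (hs : s ∈ S) (hs0 : 0 < s) : m S ≤ s :=
  Nat.sInf_le ⟨hs, hs0⟩

/-- Every element of `S` below `F S` is a sum of small atoms. -/
lemma dvd_of_lt_F_of_forall_isSmallAtom {d : ℕ} (hd : ∀ a, IsSmallAtom S a → d ∣ a) :
    ∀ s ∈ S, s < F S → d ∣ s := by
  intro s
  induction s using Nat.strong_induction_on with
  | _ s ih =>
    intro hs hsF
    rcases Nat.eq_zero_or_pos s with rfl | hs0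
    · exact dvd_zero d
    by_cases hsum : ∃ x ∈ S, ∃ y ∈ S, 0 < x ∧ 0 < y ∧ s = x + y
    · obtain ⟨x, hx, y, hy, hx0, hy0, rfl⟩ := hsum
      exact dvd_add (ih x (by omega) hx (by omega)) (ih y (by omega) hy (by omega))
    · exact hd s ⟨⟨hs, hs0, hsum⟩, hsF⟩

lemma exists_eq_B_sub_of_mem_Stilde {x : ℕ} (hx : x ∈ Stilde S) (hxB : x < B S) :
    ∃ u ∈ S, u ≤ B S ∧ x = B S - u := by
  rcases hx with hx | hx
  · exact hx
  · exact absurd hx (not_le.2 hxB)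

namespace IsNumericalSemigroup

lemma F_notMem (hS : IsNumericalSemigroup S) (hne : S ≠ univ) : F S ∉ S :=
  Nat.sSup_mem (nonempty_compl.2 hne) hS.1.2.bddAbove

lemma F_pos (hS : IsNumericalSemigroup S) (hne : S ≠ univ) : 0 < F S :=
  Nat.pos_of_ne_zero fun h => hS.F_notMem hne (h ▸ hS.1.1)

lemma B_mem_and_lt_F (hS : IsNumericalSemigroup S) (hne : S ≠ univ) : B S ∈ S ∧ B S < F S :=
  Nat.sSup_mem (s := {s | s ∈ S ∧ s < F S}) ⟨0, hS.1.1, hS.F_pos hne⟩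
    ⟨F S, fun _ hx => hx.2.le⟩

lemma lt_F_iff_le_B (hS : IsNumericalSemigroup S) (hne : S ≠ univ) {s : ℕ} (hs : s ∈ S) :
    s < F S ↔ s ≤ B S :=
  ⟨le_B hs, fun h => h.trans_lt (hS.B_mem_and_lt_F hne).2⟩

lemma m_mem_and_pos (hS : IsNumericalSemigroup S) : m S ∈ S ∧ 0 < m S := by
  have hF : F S + 1 ∈ S := by
    by_contra h
    have : F S + 1 ≤ F S := le_csSup hS.1.2.bddAbove h
    omega
  exact Nat.sInf_mem (s := {s | s ∈ S ∧ 0 < s}) ⟨F S + 1, hF, Nat.succ_pos _⟩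

lemma mul_mem (hS : IsNumericalSemigroup S) {a : ℕ} (ha : a ∈ S) (k : ℕ) : k * a ∈ S := by
  induction k with
  | zero => simpa using hS.1.1
  | succ k ih => simpa [Nat.succ_mul] using hS.2 _ ih _ ha

lemma isAtomOf_m (hS : IsNumericalSemigroup S) : IsAtomOf S (m S) := by
  refine ⟨hS.m_mem_and_pos.1, hS.m_mem_and_pos.2, ?_⟩
  rintro ⟨x, hx, y, hy, hx0, hy0, hxy⟩
  have := m_le hx hx0
  have := m_le hy hy0
  omega

lemma eq_m_of_isAtomOf_of_dvd (hS : IsNumericalSemigroup S) {a : ℕ} (ha : IsAtomOf S a)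
    (hd : m S ∣ a) : a = m S := by
  obtain ⟨hmS, hm0⟩ := hS.m_mem_and_pos
  obtain ⟨j, rfl⟩ := hd
  obtain ⟨haS, ha0, hirr⟩ := ha
  rcases j with _ | _ | k
  · simp at ha0
  · simp
  · exact absurd ⟨m S, hmS, (k + 1) * m S, hS.mul_mem hmS _, hm0, by positivity, by ring⟩ hirr

lemma ncard_smallAtoms_le_one_iff (hS : IsNumericalSemigroup S) :
    {a | IsSmallAtom S a}.ncard ≤ 1 ↔ ∀ s ∈ S, s < F S → m S ∣ s := by
  have hfin : {a | IsSmallAtom S a}.Finite := (finite_Iio (F S)).subset fun _ ha => ha.2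
  constructor
  · intro h1
    refine dvd_of_lt_F_of_forall_isSmallAtom fun a ha => ?_
    have hm : IsSmallAtom S (m S) := ⟨hS.isAtomOf_m, (m_le ha.1.1 ha.1.2.1).trans_lt ha.2⟩
    rw [(Set.ncard_le_one hfin).1 h1 a ha _ hm]
  · intro hd
    refine (Set.ncard_le_one hfin).2 fun a ha b hb => ?_
    rw [hS.eq_m_of_isAtomOf_of_dvd ha.1 (hd a ha.1.1 ha.2),
      hS.eq_m_of_isAtomOf_of_dvd hb.1 (hd b hb.1.1 hb.2)]

lemma isNumericalSemigroup_Stilde_iff (hS : IsNumericalSemigroup S) (hne : S ≠ univ) :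
    IsNumericalSemigroup (Stilde S) ↔ AddSubBClosed S := by
  have hset : IsNumericalSet (Stilde S) :=
    ⟨Or.inl ⟨B S, (hS.B_mem_and_lt_F hne).1, le_rfl, (Nat.sub_self _).symm⟩,
      (finite_Iio (B S)).subset fun _ hx => mem_Iio.2 (not_le.1 fun h => hx (Or.inr h))⟩
  refine ⟨fun hT u hu v hv huB hvB huv => ?_, fun hC => ⟨hset, fun a ha b hb => ?_⟩⟩
  · rcases hT.2 _ (Or.inl ⟨u, hu, huB, rfl⟩) _ (Or.inl ⟨v, hv, hvB, rfl⟩) with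
      ⟨t, ht, htB, heq⟩ | hge
    · rwa [show u + v - B S = t by omega]
    · exact absurd (show B S ≤ B S - u + (B S - v) from hge) (by omega)
  · by_cases hab : B S ≤ a + b
    · exact Or.inr hab
    obtain ⟨u, hu, huB, rfl⟩ := exists_eq_B_sub_of_mem_Stilde ha (by omega)
    obtain ⟨v, hv, hvB, rfl⟩ := exists_eq_B_sub_of_mem_Stilde hb (by omega)
    exact Or.inl ⟨u + v - B S, hC u hu v hv huB hvB (by omega), by omega, by omega⟩

lemma modEq_B_of_addSubBClosed (hS : IsNumericalSemigroup S) (hC : AddSubBClosed S) {s : ℕ}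
    (hs : s ∈ S) (hs0 : 0 < s) (hsB : s ≤ B S) : s ≡ B S [MOD m S] := by
  obtain ⟨hmS, hm0⟩ := hS.m_mem_and_pos
  have hms := m_le hs hs0
  set q := (B S - s) / m S
  have hqr : m S * q + (B S - s) % m S = B S - s := Nat.div_add_mod _ _
  have hr : (B S - s) % m S < m S := Nat.mod_lt _ hm0
  -- `v = (q + 1) m` is the multiple of `m` placing `s + v - B` in `(0, m]`.
  have hv : m S * (q + 1) = m S * q + m S := mul_add_one _ _
  have hw : s + m S * (q + 1) - B S ∈ S :=
    hC s hs _ (mul_comm (q + 1) (m S) ▸ hS.mul_mem hmS _) hsB (by omega) (by omega)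
  have := m_le hw (by omega)
  have hsum : s + (q + 1) * m S = B S + m S := by rw [mul_comm]; omega
  calc s ≡ s + (q + 1) * m S [MOD m S] := (Nat.add_mul_mod_self_right _ _ _).symm
    _ = B S + m S := hsum
    _ ≡ B S [MOD m S] := Nat.add_mod_right _ _

lemma addSubBClosed_iff_forall_dvd (hS : IsNumericalSemigroup S) (hne : S ≠ univ) :
    AddSubBClosed S ↔ ∀ s ∈ S, s ≤ B S → m S ∣ s := by
  obtain ⟨hmS, hm0⟩ := hS.m_mem_and_pos
  constructor
  · intro hC s hs hsB
    rcases Nat.eq_zero_or_pos s with rfl | hs0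
    · exact dvd_zero _
    have hmB : m S ≤ B S := (m_le hs hs0).trans hsB
    have hBm : B S ≡ 0 [MOD m S] :=
      (hS.modEq_B_of_addSubBClosed hC hmS hm0 hmB).symm.trans (Nat.modEq_zero_iff_dvd.2 dvd_rfl)
    exact Nat.modEq_zero_iff_dvd.1 ((hS.modEq_B_of_addSubBClosed hC hs hs0 hsB).trans hBm)
  · intro hd u hu v hv huB hvB _
    obtain ⟨t, ht⟩ := Nat.dvd_sub (dvd_add (hd u hu huB) (hd v hv hvB))
      (hd _ (hS.B_mem_and_lt_F hne).1 le_rfl)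
    rw [ht, mul_comm]
    exact hS.mul_mem hmS t

end IsNumericalSemigroup

theorem complement_semigroup_iff_at_most_one_small_atom (S : Set ℕ)
    (hS : IsNumericalSemigroup S) (hne : S ≠ Set.univ) :
    IsNumericalSemigroup (Stilde S) ↔ {a | IsSmallAtom S a}.ncard ≤ 1 := by
  rw [hS.isNumericalSemigroup_Stilde_iff hne, hS.addSubBClosed_iff_forall_dvd hne,
    hS.ncard_smallAtoms_le_one_iff]
  exact forall₂_congr fun s hs => by rw [hS.lt_F_iff_le_B hne hs]
end

section
/- Let S be a numerical semigroup with S ≠ ℕ. Then S⁽²⁾ (the complement of the complement of S) is a numerical semigroup if and only if S ∪ [B(S), ∞) has maximal embedding dimension. In particular, if S has maximal embedding dimension then S⁽²⁾ is a numerical semigroup. -/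
open Set

/-!
Write `T = S ∪ [B(S), ∞)`. Complementing twice shifts `T` down by its multiplicity:
`S⁽²⁾ = {x | x + m T ∈ T}` (for `B(S) = 0` both sides are ℕ; otherwise `m T = m S`).
Such a shift is closed under addition iff `s + t - m T ∈ T` for all positive `s, t ∈ T`, and this
is the classical criterion for maximal embedding dimension: all atoms other than `m T` lie in
`Ap(T, m T) \ {0}`, which has `m T - 1` elements, and the criterion says precisely that none of
these is a sum of two positive elements of `T`. The criterion passes from `S` to `T`.
-/

namespace IsNumericalSet

variable {S : Set ℕ}

lemma mem_of_F_lt (hS : IsNumericalSet S) {n : ℕ} (hn : F S < n) : n ∈ S := by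
  by_contra h
  exact hn.not_ge (le_csSup hS.2.bddAbove h)

lemma m_mem (hS : IsNumericalSet S) : m S ∈ S ∧ 0 < m S :=
  Nat.sInf_mem (s := {s | s ∈ S ∧ 0 < s})
    ⟨F S + 1, hS.mem_of_F_lt (Nat.lt_succ_self _), Nat.succ_pos _⟩

lemma F_notMem (hS : IsNumericalSet S) (hne : S ≠ univ) : F S ∉ S :=
  Nat.sSup_mem (nonempty_compl.mpr hne) hS.2.bddAbove

lemma B_mem_and_lt_F (hS : IsNumericalSet S) (hne : S ≠ univ) : B S ∈ S ∧ B S < F S := by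
  have hF : 0 < F S := Nat.pos_of_ne_zero fun h => hS.F_notMem hne (h ▸ hS.1)
  exact Nat.sSup_mem (s := {s | s ∈ S ∧ s < F S}) ⟨0, hS.1, hF⟩ ⟨F S, fun _ h => h.2.le⟩

end IsNumericalSet

lemma m_le_of_mem {S : Set ℕ} {s : ℕ} (hs : s ∈ S) (hpos : 0 < s) : m S ≤ s :=
  Nat.sInf_le ⟨hs, hpos⟩

lemma m_union_Ici_of_le {S : Set ℕ} (hS : IsNumericalSet S) {b : ℕ} (hb : m S ≤ b) :
    m (S ∪ Ici b) = m S := by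
  obtain ⟨hmS, hmpos⟩ := hS.m_mem
  refine le_antisymm (m_le_of_mem (Or.inl hmS) hmpos) (le_csInf ⟨m S, Or.inl hmS, hmpos⟩ ?_)
  rintro u ⟨hu | hu, hpos⟩
  · exact m_le_of_mem hu hpos
  · exact hb.trans hu

namespace IsNumericalSemigroup

variable {S : Set ℕ}

lemma one_notMem (hS : IsNumericalSemigroup S) (hne : S ≠ univ) : 1 ∉ S := by
  intro h1
  refine hne (eq_univ_of_forall fun n => ?_)
  induction n with
  | zero => exact hS.1.1
  | succ k ih => exact hS.2 k ih 1 h1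

lemma add_mul_mem (hS : IsNumericalSemigroup S) {s n : ℕ} (hs : s ∈ S) (hn : n ∈ S) (k : ℕ) :
    s + n * k ∈ S := by
  induction k with
  | zero => simpa using hs
  | succ k ih => simpa [mul_add, ← add_assoc] using hS.2 _ ih n hn

lemma union_Ici (hS : IsNumericalSemigroup S) (b : ℕ) : IsNumericalSemigroup (S ∪ Ici b) := by
  refine ⟨⟨Or.inl hS.1.1, hS.1.2.subset (compl_subset_compl.mpr subset_union_left)⟩, ?_⟩
  rintro x (hx | hx) y (hy | hy)
  · exact Or.inl (hS.2 x hx y hy)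
  all_goals exact Or.inr (by simp only [mem_Ici] at *; omega)

end IsNumericalSemigroup

def apery (T : Set ℕ) (n : ℕ) : Set ℕ := {s | s ∈ T ∧ ∀ t ∈ T, t + n ≠ s}

lemma IsNumericalSet.mod_image_apery {T : Set ℕ} (hT : IsNumericalSet T) {n : ℕ} (hn : 0 < n) :
    (· % n) '' apery T n = Iio n := by
  refine Subset.antisymm (image_subset_iff.mpr fun s _ => Nat.mod_lt s hn) fun r hr => ?_
  -- the least element of `T` in the residue class of `r` lies in the Apéry set
  set C := {s | s ∈ T ∧ s % n = r}
  have hC : C.Nonempty := by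
    refine ⟨r + n * (F T + 1), hT.mem_of_F_lt ?_, ?_⟩
    · nlinarith
    · simp [Nat.mod_eq_of_lt (mem_Iio.mp hr)]
  obtain ⟨hmin, hmod⟩ := Nat.sInf_mem hC
  refine ⟨sInf C, ⟨hmin, fun t ht heq => ?_⟩, hmod⟩
  have : sInf C ≤ t := Nat.sInf_le ⟨ht, by rw [← hmod, ← heq, Nat.add_mod_right]⟩
  omega

namespace IsNumericalSemigroup

variable {T : Set ℕ} {n : ℕ}

lemma eq_of_mem_apery_of_mod_eq (hT : IsNumericalSemigroup T) (hn : n ∈ T) {s s' : ℕ}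
    (hs : s ∈ apery T n) (hs' : s' ∈ apery T n) (hle : s ≤ s') (hmod : s % n = s' % n) :
    s = s' := by
  obtain ⟨k, hk⟩ := (Nat.modEq_iff_dvd' hle).mp hmod
  cases k with
  | zero => omega
  | succ k =>
    rw [mul_add, mul_one] at hk
    exact absurd (by omega) (hs'.2 _ (hT.add_mul_mem hs.1 hn k))

lemma mod_injOn_apery (hT : IsNumericalSemigroup T) (hn : n ∈ T) :
    InjOn (· % n) (apery T n) := by
  intro s hs s' hs' hmod
  rcases le_total s s' with hle | hle
  · exact hT.eq_of_mem_apery_of_mod_eq hn hs hs' hle hmod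
  · exact (hT.eq_of_mem_apery_of_mod_eq hn hs' hs hle hmod.symm).symm

lemma ncard_apery (hT : IsNumericalSemigroup T) (hn : n ∈ T) (hpos : 0 < n) :
    (apery T n).ncard = n := by
  rw [← (hT.mod_injOn_apery hn).ncard_image, IsNumericalSet.mod_image_apery hT.1 hpos,
    ncard_Iio_nat]

end IsNumericalSemigroup

namespace IsNumericalSet

variable {T : Set ℕ}

lemma isAtomOf_m (hT : IsNumericalSet T) : IsAtomOf T (m T) := by
  obtain ⟨hmT, hmpos⟩ := hT.m_mem
  refine ⟨hmT, hmpos, ?_⟩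
  rintro ⟨x, hx, y, hy, hxpos, hypos, hxy⟩
  have := m_le_of_mem hx hxpos
  have := m_le_of_mem hy hypos
  omega

lemma setOf_isAtomOf_subset (hT : IsNumericalSet T) :
    {a | IsAtomOf T a} ⊆ insert (m T) (apery T (m T) \ {0}) := by
  rintro a ⟨haT, hapos, hnot⟩
  rcases eq_or_ne a (m T) with rfl | ha
  · exact mem_insert _ _
  refine Or.inr ⟨⟨haT, fun t ht heq => hnot ⟨t, ht, m T, hT.m_mem.1, ?_, hT.m_mem.2, heq.symm⟩⟩,
    hapos.ne'⟩
  omega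

end IsNumericalSet

namespace IsNumericalSemigroup

variable {T : Set ℕ}

lemma ncard_insert_m_apery (hT : IsNumericalSemigroup T) :
    (insert (m T) (apery T (m T) \ {0})).ncard = m T := by
  obtain ⟨hmT, hmpos⟩ := hT.1.m_mem
  have hfin : (apery T (m T)).Finite := finite_of_ncard_pos (by rw [hT.ncard_apery hmT hmpos]; omega)
  have h0 : 0 ∈ apery T (m T) := ⟨hT.1.1, fun _ _ h => by omega⟩
  have hm : m T ∉ apery T (m T) \ {0} := fun h => h.1.2 0 hT.1.1 (zero_add _)
  rw [ncard_insert_of_notMem hm hfin.sdiff, ncard_sdiff_singleton_of_mem h0,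
    hT.ncard_apery hmT hmpos]
  omega

lemma maxED_iff_apery_subset (hT : IsNumericalSemigroup T) :
    MaxED T ↔ apery T (m T) \ {0} ⊆ {a | IsAtomOf T a} := by
  have hsub := hT.1.setOf_isAtomOf_subset
  have hfin : (insert (m T) (apery T (m T) \ {0})).Finite :=
    finite_of_ncard_pos (by rw [hT.ncard_insert_m_apery]; exact hT.1.m_mem.2)
  constructor
  · intro hmed
    rw [eq_of_subset_of_ncard_le hsub (by rw [hT.ncard_insert_m_apery]; exact hmed.ge) hfin]
    exact subset_insert _ _
  · intro hap
    rw [MaxED, numAtoms, ← hT.ncard_insert_m_apery,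
      hsub.antisymm (insert_subset hT.1.isAtomOf_m hap)]

lemma apery_subset_iff (hT : IsNumericalSemigroup T) :
    apery T (m T) \ {0} ⊆ {a | IsAtomOf T a} ↔
      ∀ s ∈ T, ∀ t ∈ T, 0 < s → 0 < t → s + t - m T ∈ T := by
  constructor
  · intro hap s hs t ht hspos htpos
    by_contra hnot
    have hst : s + t ∈ apery T (m T) \ {0} :=
      ⟨⟨hT.2 s hs t ht, fun u hu heq => hnot (by rwa [← heq, Nat.add_sub_cancel])⟩, mem_singleton_iff.not.mpr (by omega)⟩
    exact (hap hst).2.2 ⟨s, hs, t, ht, hspos, htpos, rfl⟩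
  · rintro hcl w ⟨⟨hwT, hw⟩, hw0⟩
    refine ⟨hwT, Nat.pos_of_ne_zero hw0, ?_⟩
    rintro ⟨x, hx, y, hy, hxpos, hypos, rfl⟩
    have := m_le_of_mem hx hxpos
    exact hw _ (hcl x hx y hy hxpos hypos) (by omega)

lemma maxED_iff (hT : IsNumericalSemigroup T) :
    MaxED T ↔ ∀ s ∈ T, ∀ t ∈ T, 0 < s → 0 < t → s + t - m T ∈ T :=
  hT.maxED_iff_apery_subset.trans hT.apery_subset_iff

end IsNumericalSemigroup

namespace IsNumericalSemigroup

variable {T : Set ℕ}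

lemma isNumericalSemigroup_setOf_add_m_mem_iff (hT : IsNumericalSemigroup T) :
    IsNumericalSemigroup {x | x + m T ∈ T} ↔ MaxED T := by
  obtain ⟨hmT, hmpos⟩ := hT.1.m_mem
  rw [hT.maxED_iff]
  constructor
  · rintro ⟨-, hadd⟩ s hs t ht hspos htpos
    have hms := m_le_of_mem hs hspos
    have hmt := m_le_of_mem ht htpos
    have : s - m T + (t - m T) + m T ∈ T :=
      hadd (s - m T) (show s - m T + m T ∈ T by rwa [Nat.sub_add_cancel hms])
        (t - m T) (show t - m T + m T ∈ T by rwa [Nat.sub_add_cancel hmt])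
    rwa [show s - m T + (t - m T) + m T = s + t - m T by omega] at this
  · intro hcl
    refine ⟨⟨show 0 + m T ∈ T by rwa [zero_add], hT.1.2.preimage (add_left_injective _).injOn⟩, ?_⟩
    intro a ha b hb
    have := hcl _ ha _ hb (by omega) (by omega)
    rwa [show a + m T + (b + m T) - m T = a + b + m T by omega] at this

lemma maxED_union_Ici (hT : IsNumericalSemigroup T) (b : ℕ) (hmed : MaxED T) :
    MaxED (T ∪ Ici b) := by
  rw [(hT.union_Ici b).maxED_iff]
  intro s hs t ht hspos htpos
  have hms := m_le_of_mem hs hspos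
  have hmt := m_le_of_mem ht htpos
  rcases hs with hs | hs
  · rcases ht with ht | ht
    · by_cases hsb : b ≤ s
      · exact Or.inr (by rw [mem_Ici]; omega)
      · rw [m_union_Ici_of_le hT.1 ((m_le_of_mem hs hspos).trans (by omega))]
        exact Or.inl (hT.maxED_iff.mp hmed s hs t ht hspos htpos)
    · exact Or.inr (by rw [mem_Ici] at *; omega)
  · exact Or.inr (by rw [mem_Ici] at *; omega)

end IsNumericalSemigroup

section Complement

variable {S : Set ℕ}

lemma mem_Stilde {x : ℕ} : x ∈ Stilde S ↔ (∃ s ∈ S, s ≤ B S ∧ x = B S - s) ∨ B S ≤ x :=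
  Iff.rfl

lemma sub_one_notMem_Stilde (h1 : 1 ∉ S) (hB : 0 < B S) : B S - 1 ∉ Stilde S := by
  intro h
  rcases mem_Stilde.mp h with ⟨s, hs, hsB, heq⟩ | hge
  · exact h1 (by rwa [show s = 1 by omega] at hs)
  · omega

lemma F_Stilde (h1 : 1 ∉ S) (hB : 0 < B S) : F (Stilde S) = B S - 1 :=
  IsGreatest.csSup_eq ⟨sub_one_notMem_Stilde h1 hB, fun x hx => by
    by_contra h
    exact hx (mem_Stilde.mpr (Or.inr (by omega)))⟩

lemma B_Stilde (hS : IsNumericalSet S) (hne : S ≠ univ) (h1 : 1 ∉ S) (hB : 0 < B S) :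
    B (Stilde S) = B S - m S := by
  obtain ⟨hmS, hmpos⟩ := hS.m_mem
  have hmB : m S ≤ B S := m_le_of_mem (hS.B_mem_and_lt_F hne).1 hB
  have hm1 : m S ≠ 1 := fun h => h1 (h ▸ hmS)
  refine IsGreatest.csSup_eq ⟨⟨Or.inl ⟨m S, hmS, hmB, rfl⟩, ?_⟩, fun x ⟨hx, hlt⟩ => ?_⟩
  · rw [F_Stilde h1 hB]
    omega
  rw [F_Stilde h1 hB] at hlt
  rcases mem_Stilde.mp hx with ⟨s, hs, hsB, rfl⟩ | hge
  · have := m_le_of_mem hs (by omega)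
    omega
  · omega

lemma Stilde_Stilde (hS : IsNumericalSet S) (hne : S ≠ univ) (h1 : 1 ∉ S) (hB : 0 < B S) :
    Stilde (Stilde S) = {x | x + m S ∈ S ∨ B S - m S ≤ x} := by
  have hmB : m S ≤ B S := m_le_of_mem (hS.B_mem_and_lt_F hne).1 hB
  have hmpos := hS.m_mem.2
  ext x
  rw [mem_Stilde, B_Stilde hS hne h1 hB, mem_ofPred_eq]
  constructor
  · rintro (⟨v, hv, hvB, rfl⟩ | hge)
    · rcases mem_Stilde.mp hv with ⟨s, hs, hsB, rfl⟩ | hv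
      · exact Or.inl (by rwa [show B S - m S - (B S - s) + m S = s by omega])
      · omega
    · exact Or.inr hge
  · rintro (hx | hge)
    · by_cases hxB : B S - m S ≤ x
      · exact Or.inr hxB
      · exact Or.inl ⟨B S - (x + m S), Or.inl ⟨x + m S, hx, by omega, rfl⟩, by omega, by omega⟩
    · exact Or.inr hge

end Complement

lemma IsNumericalSemigroup.complOp_complOp {S : Set ℕ} (hS : IsNumericalSemigroup S)
    (hne : S ≠ univ) :
    complOp (complOp S) = {x | x + m (S ∪ Ici (B S)) ∈ S ∪ Ici (B S)} := by
  rcases (B S).eq_zero_or_pos with hB | hB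
  · have hStilde : Stilde S = univ :=
      eq_univ_of_forall fun n => mem_Stilde.mpr (Or.inr (by omega))
    simp [complOp, hne, hStilde, hB]
  have h1 := hS.one_notMem hne
  have hmB : m S ≤ B S := m_le_of_mem (hS.1.B_mem_and_lt_F hne).1 hB
  have hStilde : Stilde S ≠ univ := fun h => sub_one_notMem_Stilde h1 hB (h ▸ mem_univ _)
  rw [complOp, complOp, if_neg hne, if_neg hStilde, Stilde_Stilde hS.1 hne h1 hB,
    m_union_Ici_of_le hS.1 hmB]
  ext x
  simp only [mem_ofPred_eq, mem_union, mem_Ici]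
  exact or_congr_right (by omega)

theorem double_complement_semigroup_iff_maxED (S : Set ℕ) (hS : IsNumericalSemigroup S)
    (hne : S ≠ Set.univ) :
    (IsNumericalSemigroup (complOp (complOp S)) ↔ MaxED (S ∪ {n | B S ≤ n})) ∧
      (MaxED S → IsNumericalSemigroup (complOp (complOp S))) := by
  have hT := hS.union_Ici (B S)
  rw [hS.complOp_complOp hne, hT.isNumericalSemigroup_setOf_add_m_mem_iff]
  exact ⟨Iff.rfl, hS.maxED_union_Ici (B S)⟩
end

section
/- For every numerical semigroup S with S ≠ ℕ, there exists a numerical semigroup T with T⁽²⁾ = S; explicitly, T = {0} ∪ ({x + m(S) : x ∈ S} \ {F(S) + 2m(S)}) is a numerical semigroup satisfying F(T) = F(S) + 2m(S), B(T) = F(S) + 2m(S) − 1, and T⁽²⁾ = S. -/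
open Set

/-!
Write `f = F(S)`, `m = m(S)` and `T = shiftPuncture S`. A sum of two shifted elements is
`x + y + 2m`, and it misses `f + 2m` because `f ∉ S`; so `T` is a semigroup with `F(T) = f + 2m`,
and `B(T) = f + 2m - 1` since `f + m - 1 > f` (as `m ≥ 2`) lies in `S`. For any `U`, `x ∈ Ũ` iff
`B(U) ≤ x` or `B(U) - x ∈ U`, i.e. `Ũ` reflects `U` across `B(U)`. Hence below `f + m - 1` the set
`T̃` is the reflection of `S` across `f + m - 1`, with `F(T̃) = f + 2m - 2` and `B(T̃) = f + m - 1`,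
and reflecting once more across `f + m - 1` gives back `S`.
-/

theorem F_eq_of_notMem {U : Set ℕ} {a : ℕ} (ha : a ∉ U) (hgt : ∀ n, a < n → n ∈ U) :
    F U = a :=
  IsGreatest.csSup_eq ⟨ha, fun n hn => not_lt.1 fun h => hn (hgt n h)⟩

theorem B_eq_of_mem {U : Set ℕ} {b : ℕ} (hb : b ∈ U) (hbF : b < F U)
    (hle : ∀ s ∈ U, s < F U → s ≤ b) : B U = b :=
  IsGreatest.csSup_eq ⟨⟨hb, hbF⟩, fun s hs => hle s hs.1 hs.2⟩

theorem mem_Stilde_iff {U : Set ℕ} {x : ℕ} : x ∈ Stilde U ↔ B U ≤ x ∨ B U - x ∈ U := by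
  constructor
  · rintro (⟨s, hs, hsB, rfl⟩ | hx)
    · exact Or.inr (by rwa [Nat.sub_sub_self hsB])
    · exact Or.inl hx
  · rintro (hx | hx)
    · exact Or.inr hx
    · rcases le_total x (B U) with hxB | hxB
      · exact Or.inl ⟨B U - x, hx, Nat.sub_le _ _, (Nat.sub_sub_self hxB).symm⟩
      · exact Or.inr hxB

theorem complOp_of_ne_univ {U : Set ℕ} (hU : U ≠ univ) : complOp U = Stilde U := by
  rw [complOp, if_neg hU]

section NumericalSemigroup

variable {S : Set ℕ}

theorem mem_of_F_lt (hfin : Sᶜ.Finite) {n : ℕ} (hn : F S < n) : n ∈ S :=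
  not_not.1 fun h => (le_csSup hfin.bddAbove h).not_gt hn

theorem F_notMem (hfin : Sᶜ.Finite) (hne : S ≠ univ) : F S ∉ S :=
  Nat.sSup_mem (nonempty_compl.2 hne) hfin.bddAbove

theorem m_mem_and_pos (hfin : Sᶜ.Finite) : m S ∈ S ∧ 0 < m S := by
  have hpos : {s | s ∈ S ∧ 0 < s}.Nonempty :=
    ⟨F S + 1, mem_of_F_lt hfin (Nat.lt_succ_self _), Nat.succ_pos _⟩
  exact Nat.sInf_mem hpos

theorem eq_univ_of_one_mem (hS : IsNumericalSemigroup S) (h1 : 1 ∈ S) : S = univ := by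
  refine eq_univ_of_forall fun n => ?_
  induction n with
  | zero => exact hS.1.1
  | succ k ih => exact hS.2 k ih 1 h1

theorem two_le_m (hS : IsNumericalSemigroup S) (hne : S ≠ univ) : 2 ≤ m S := by
  obtain ⟨hm, hpos⟩ := m_mem_and_pos hS.1.2
  by_contra h
  have h1 : m S = 1 := by omega
  exact hne (eq_univ_of_one_mem hS (h1 ▸ hm))

end NumericalSemigroup

def shiftPuncture (S : Set ℕ) : Set ℕ :=
  insert 0 ({y | ∃ x ∈ S, y = x + m S} \ {F S + 2 * m S})

section ShiftPuncture

variable {S : Set ℕ}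

theorem mem_shiftPuncture {y : ℕ} :
    y ∈ shiftPuncture S ↔ y = 0 ∨ (m S ≤ y ∧ y - m S ∈ S ∧ y ≠ F S + 2 * m S) := by
  have hshift : (∃ x ∈ S, y = x + m S) ↔ m S ≤ y ∧ y - m S ∈ S :=
    ⟨fun ⟨x, hx, hy⟩ => ⟨by omega, by rwa [hy, Nat.add_sub_cancel]⟩,
      fun ⟨hle, hy⟩ => ⟨y - m S, hy, (Nat.sub_add_cancel hle).symm⟩⟩
  simp only [shiftPuncture, mem_insert_iff, mem_sdiff, mem_ofPred_eq, mem_singleton_iff, hshift,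
    and_assoc]

theorem mem_shiftPuncture_of_lt (hfin : Sᶜ.Finite) {n : ℕ} (hn : F S + 2 * m S < n) :
    n ∈ shiftPuncture S :=
  mem_shiftPuncture.2 (Or.inr ⟨by omega, mem_of_F_lt hfin (by omega), by omega⟩)

theorem notMem_shiftPuncture (hfin : Sᶜ.Finite) : F S + 2 * m S ∉ shiftPuncture S := by
  have hm := (m_mem_and_pos hfin).2
  rw [mem_shiftPuncture]
  rintro (h | ⟨-, -, h⟩) <;> omega

theorem isNumericalSemigroup_shiftPuncture (hS : IsNumericalSemigroup S) (hne : S ≠ univ) :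
    IsNumericalSemigroup (shiftPuncture S) := by
  have hF := F_notMem hS.1.2 hne
  have hm := (m_mem_and_pos hS.1.2).1
  refine ⟨⟨mem_insert _ _, (finite_Iic (F S + 2 * m S)).subset fun n hn => ?_⟩,
    fun a ha b hb => ?_⟩
  · by_contra h
    exact hn (mem_shiftPuncture_of_lt hS.1.2 (not_le.1 (mt mem_Iic.2 h)))
  rw [mem_shiftPuncture] at ha hb ⊢
  rcases ha with rfl | ⟨ham, ha, haF⟩
  · simpa using hb
  rcases hb with rfl | ⟨hbm, hb, hbF⟩
  · simpa using Or.inr ⟨ham, ha, haF⟩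
  refine Or.inr ⟨by omega, ?_, fun h => hF ?_⟩
  · convert hS.2 _ (hS.2 _ ha _ hb) _ hm using 1
    omega
  · convert hS.2 _ ha _ hb using 1
    omega

theorem F_shiftPuncture (hfin : Sᶜ.Finite) : F (shiftPuncture S) = F S + 2 * m S :=
  F_eq_of_notMem (notMem_shiftPuncture hfin) fun _ => mem_shiftPuncture_of_lt hfin

theorem B_shiftPuncture (hS : IsNumericalSemigroup S) (hne : S ≠ univ) :
    B (shiftPuncture S) = F S + 2 * m S - 1 := by
  have hm := two_le_m hS hne
  have hF := F_shiftPuncture hS.1.2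
  refine B_eq_of_mem (mem_shiftPuncture.2 (Or.inr ⟨by omega, ?_, by omega⟩)) (by omega)
    fun s _ hs => by omega
  exact mem_of_F_lt hS.1.2 (by omega)

theorem mem_Stilde_shiftPuncture (hS : IsNumericalSemigroup S) (hne : S ≠ univ) {x : ℕ} :
    x ∈ Stilde (shiftPuncture S) ↔
      F S + 2 * m S - 1 ≤ x ∨ (x ≤ F S + m S - 1 ∧ F S + m S - 1 - x ∈ S) := by
  have hm := two_le_m hS hne
  have hsub : F S + 2 * m S - 1 - x - m S = F S + m S - 1 - x := by omega
  rw [mem_Stilde_iff, B_shiftPuncture hS hne, mem_shiftPuncture, hsub]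
  constructor
  · rintro (h | h | ⟨hle, hx, -⟩)
    · exact Or.inl h
    · exact Or.inl (by omega)
    · exact Or.inr ⟨by omega, hx⟩
  · rintro (h | ⟨hle, hx⟩)
    · exact Or.inl h
    · exact Or.inr (Or.inr ⟨by omega, hx, by omega⟩)

theorem notMem_Stilde_shiftPuncture (hS : IsNumericalSemigroup S) (hne : S ≠ univ) :
    F S + 2 * m S - 2 ∉ Stilde (shiftPuncture S) := by
  have hm := two_le_m hS hne
  rw [mem_Stilde_shiftPuncture hS hne]
  rintro (h | ⟨h, -⟩) <;> omega

theorem F_Stilde_shiftPuncture (hS : IsNumericalSemigroup S) (hne : S ≠ univ) :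
    F (Stilde (shiftPuncture S)) = F S + 2 * m S - 2 :=
  F_eq_of_notMem (notMem_Stilde_shiftPuncture hS hne) fun _ hn =>
    (mem_Stilde_shiftPuncture hS hne).2 (Or.inl (by omega))

theorem B_Stilde_shiftPuncture (hS : IsNumericalSemigroup S) (hne : S ≠ univ) :
    B (Stilde (shiftPuncture S)) = F S + m S - 1 := by
  have hm := two_le_m hS hne
  have hF := F_Stilde_shiftPuncture hS hne
  refine B_eq_of_mem ((mem_Stilde_shiftPuncture hS hne).2 (Or.inr ⟨le_rfl, ?_⟩)) (by omega)
    fun s hs hlt => ?_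
  · simpa using hS.1.1
  · rcases (mem_Stilde_shiftPuncture hS hne).1 hs with h | ⟨h, -⟩ <;> omega

theorem Stilde_Stilde_shiftPuncture (hS : IsNumericalSemigroup S) (hne : S ≠ univ) :
    Stilde (Stilde (shiftPuncture S)) = S := by
  have hm := two_le_m hS hne
  ext x
  rw [mem_Stilde_iff, B_Stilde_shiftPuncture hS hne, mem_Stilde_shiftPuncture hS hne]
  by_cases hx : F S + m S - 1 ≤ x
  · exact iff_of_true (Or.inl hx) (mem_of_F_lt hS.1.2 (by omega))
  · rw [Nat.sub_sub_self (by omega : x ≤ F S + m S - 1)]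
    have hfar : ¬F S + 2 * m S - 1 ≤ F S + m S - 1 - x := by omega
    simp only [hx, hfar, Nat.sub_le, true_and, false_or]

end ShiftPuncture

theorem double_complement_surjective (S : Set ℕ) (hS : IsNumericalSemigroup S)
    (hne : S ≠ Set.univ) :
    IsNumericalSemigroup
        (insert 0 ({y | ∃ x ∈ S, y = x + m S} \ {F S + 2 * m S})) ∧
      F (insert 0 ({y | ∃ x ∈ S, y = x + m S} \ {F S + 2 * m S})) = F S + 2 * m S ∧
      B (insert 0 ({y | ∃ x ∈ S, y = x + m S} \ {F S + 2 * m S})) = F S + 2 * m S - 1 ∧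
      complOp (complOp (insert 0 ({y | ∃ x ∈ S, y = x + m S} \ {F S + 2 * m S}))) = S := by
  have hT : shiftPuncture S ≠ univ :=
    (ne_univ_iff_exists_notMem _).2 ⟨_, notMem_shiftPuncture hS.1.2⟩
  have hT' : Stilde (shiftPuncture S) ≠ univ :=
    (ne_univ_iff_exists_notMem _).2 ⟨_, notMem_Stilde_shiftPuncture hS hne⟩
  refine ⟨isNumericalSemigroup_shiftPuncture hS hne, F_shiftPuncture hS.1.2,
    B_shiftPuncture hS hne, ?_⟩
  change complOp (complOp (shiftPuncture S)) = S
  rw [complOp_of_ne_univ hT, complOp_of_ne_univ hT', Stilde_Stilde_shiftPuncture hS hne]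
end
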